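/- Sublinear convergence of VR-SGD (Option II, smooth, non-strongly convex): Under the per-epoch bound of VR-SGD with Option II, the output x̂^S satisfies E[f(x̂^S)] − f(x*) ≤ (2(m+1)/((γ − 4m + 2)S)) (f(x̃^0) − f(x*)) + (β(β−1)L/(2(γ − 4m + 2)S)) ‖x̃^0 − x*‖², where γ = (β−1)(m−1), provided γ − 4m + 2 > 0. -/

import Mathlib

/-
In expectation over the index drawn at an inner step, SVRG satisfies
  `E‖x_{k+1} - x*‖² ≤ E‖x_k - x*‖² - (2η - 4Lη²) E[f(x_k) - f*] + 4Lη² E[f(x̃) - f*]`: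
the cross term is controlled by convexity, and the second moment of the variance-reduced
gradient by cocoercivity of the component gradients (a variance is at most a second moment).
Summing over an epoch, using Jensen for the Option II snapshot and telescoping over epochs (each
epoch starts where the previous one ended) bounds `∑ₛ E[f(x̃ˢ) - f*]`; the output rule and Jensen
once more bound `E f(x̂^S) - f*` by `1/S` times this sum.
-/

open Set Finset Function
open scoped RealInnerProductSpace

section SmoothConvex

variable {E : Type*} [NormedAddCommGroup E] [InnerProductSpace ℝ E] [CompleteSpace E]

lemma hasDerivAt_comp_add_smul {g : E → ℝ} (hg : Differentiable ℝ g) (a v : E) (t : ℝ) :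
    HasDerivAt (fun t : ℝ => g (a + t • v)) ⟪gradient g (a + t • v), v⟫ t := by
  have hline : HasDerivAt (fun t : ℝ => a + t • v) v t := by
    simpa using ((hasDerivAt_id t).smul_const v).const_add a
  simpa [InnerProductSpace.toDual_apply_apply, Function.comp_def] using
    (hg _).hasGradientAt.hasFDerivAt.comp_hasDerivAt t hline

lemma ConvexOn.add_inner_gradient_le {g : E → ℝ} (hconv : ConvexOn ℝ univ g)
    (hg : Differentiable ℝ g) (a b : E) : g a + ⟪gradient g a, b - a⟫ ≤ g b := by
  have hline : ConvexOn ℝ univ (fun t : ℝ => g (a + t • (b - a))) := by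
    simpa [Function.comp_def, AffineMap.lineMap_apply_module', add_comm] using
      hconv.comp_affineMap (AffineMap.lineMap a b)
  have := hline.le_slope_of_hasDerivAt (mem_univ 0) (mem_univ 1) zero_lt_one
    (by simpa only [zero_smul, add_zero] using hasDerivAt_comp_add_smul hg a (b - a) 0)
  rw [slope_def_field] at this
  simp only [one_smul, zero_smul, add_zero, add_sub_cancel, sub_zero, div_one] at this
  linarith

lemma le_add_inner_gradient_add_sq {g : E → ℝ} (hg : Differentiable ℝ g) {L : ℝ}
    (hlip : ∀ u v, ‖gradient g u - gradient g v‖ ≤ L * ‖u - v‖) (a b : E) :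
    g b ≤ g a + ⟪gradient g a, b - a⟫ + L / 2 * ‖b - a‖ ^ 2 := by
  set v := b - a
  set ψ : ℝ → ℝ := fun t => L * t ^ 2 * ‖v‖ ^ 2 / 2 + g a + t * ⟪gradient g a, v⟫
      - g (a + t • v) with hψ
  have hderiv : ∀ t : ℝ, HasDerivAt ψ
      (L * t * ‖v‖ ^ 2 + ⟪gradient g a, v⟫ - ⟪gradient g (a + t • v), v⟫) t := by
    intro t
    refine HasDerivAt.sub ?_ (hasDerivAt_comp_add_smul hg a v t)
    have := ((((hasDerivAt_pow 2 t).const_mul L).mul_const (‖v‖ ^ 2)).div_const 2).add_const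
      (g a) |>.add ((hasDerivAt_id t).mul_const ⟪gradient g a, v⟫)
    convert this using 1
    · ext; simp only [Pi.add_apply, id]
    · push_cast; ring
  have hmono : MonotoneOn ψ (Icc 0 1) := by
    refine monotoneOn_of_deriv_nonneg (convex_Icc 0 1)
      (HasDerivAt.continuousOn fun t _ => hderiv t)
      (fun t _ => (hderiv t).differentiableAt.differentiableWithinAt) fun t ht => ?_
    rw [interior_Icc] at ht
    rw [(hderiv t).deriv]
    have hgap : ⟪gradient g (a + t • v) - gradient g a, v⟫ ≤ L * t * ‖v‖ ^ 2 := by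
      calc _ ≤ ‖gradient g (a + t • v) - gradient g a‖ * ‖v‖ := real_inner_le_norm _ _
        _ ≤ L * ‖t • v‖ * ‖v‖ := by
          gcongr; simpa using hlip (a + t • v) a
        _ = L * t * ‖v‖ ^ 2 := by rw [norm_smul, Real.norm_of_nonneg ht.1.le]; ring
    rw [inner_sub_left] at hgap
    linarith
  have h01 := hmono (left_mem_Icc.2 zero_le_one) (right_mem_Icc.2 zero_le_one) zero_le_one
  simp only [hψ, v, one_smul, zero_smul, add_zero, add_sub_cancel, one_pow, mul_one, zero_mul,
    ne_eq, OfNat.ofNat_ne_zero, not_false_eq_true, zero_pow, mul_zero, zero_div, zero_add,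
    sub_self] at h01
  linarith

lemma ConvexOn.norm_sub_gradient_sq_le {g : E → ℝ} (hconv : ConvexOn ℝ univ g)
    (hg : Differentiable ℝ g) {L : ℝ} (hL : 0 < L)
    (hlip : ∀ u v, ‖gradient g u - gradient g v‖ ≤ L * ‖u - v‖) (a b : E) :
    ‖gradient g a - gradient g b‖ ^ 2 ≤ 2 * L * (g a - g b - ⟪gradient g b, a - b⟫) := by
  -- `h` is convex and `L`-smooth with a critical point, hence a minimum, at `b`; one gradient
  -- step from `a` decreases it by at least `‖∇h a‖² / (2L)`.
  set c := gradient g b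
  set h : E → ℝ := fun z => g z - ⟪c, z⟫
  have hgrad : ∀ z, gradient h z = gradient g z - c := fun z => by
    refine HasGradientAt.gradient ?_
    rw [hasGradientAt_iff_hasFDerivAt, map_sub]
    exact (hg z).hasGradientAt.hasFDerivAt.sub (InnerProductSpace.toDual ℝ E c).hasFDerivAt
  have hdiff : Differentiable ℝ h := fun z => (hg z).sub (innerSL ℝ c).differentiableAt
  have hhconv : ConvexOn ℝ univ h := hconv.sub ((innerₛₗ ℝ c).concaveOn convex_univ)
  have hmin : ∀ z, h b ≤ h z := fun z => by
    simpa only [hgrad, c, sub_self, inner_zero_left, add_zero] using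
      hhconv.add_inner_gradient_le hdiff b z
  have hdesc := le_add_inner_gradient_add_sq hdiff (L := L)
    (fun u v => by simpa [hgrad] using hlip u v) a (a - (1 / L) • gradient h a)
  have hstep : h (a - (1 / L) • gradient h a) ≤ h a - 1 / (2 * L) * ‖gradient h a‖ ^ 2 := by
    rw [sub_sub_cancel_left, inner_neg_right, real_inner_smul_right, real_inner_self_eq_norm_sq,
      norm_neg, norm_smul, Real.norm_of_nonneg (by positivity)] at hdesc
    convert hdesc using 1
    field_simp
    ring
  have hval : h a - h b = g a - g b - ⟪c, a - b⟫ := by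
    simp only [h, inner_sub_right]; ring
  have hdecrease : 1 / (2 * L) * ‖gradient g a - c‖ ^ 2 ≤ g a - g b - ⟪c, a - b⟫ := by
    rw [← hval, ← hgrad]
    linarith [hmin (a - (1 / L) • gradient h a)]
  calc ‖gradient g a - c‖ ^ 2 = 2 * L * (1 / (2 * L) * ‖gradient g a - c‖ ^ 2) := by
        field_simp
    _ ≤ _ := by gcongr

end SmoothConvex

lemma Finset.sum_norm_average_sub_sq_le {ι E : Type*} [NormedAddCommGroup E]
    [InnerProductSpace ℝ E] (s : Finset ι) (X : ι → E) :
    ∑ j ∈ s, ‖(1 / #s : ℝ) • ∑ i ∈ s, X i - X j‖ ^ 2 ≤ ∑ j ∈ s, ‖X j‖ ^ 2 := by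
  set Xbar := (1 / #s : ℝ) • ∑ i ∈ s, X i
  have hsum : ∑ j ∈ s, ⟪Xbar, X j⟫ = #s * ‖Xbar‖ ^ 2 := by
    rcases s.eq_empty_or_nonempty with rfl | hs
    · simp
    rw [← inner_sum, show ∑ i ∈ s, X i = (#s : ℝ) • Xbar by
      rw [smul_smul, mul_one_div_cancel (by exact_mod_cast hs.card_ne_zero), one_smul],
      real_inner_smul_right, real_inner_self_eq_norm_sq]
  simp only [norm_sub_sq_real, sum_add_distrib, sum_sub_distrib, ← mul_sum, hsum, sum_const,
    nsmul_eq_mul]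
  nlinarith [norm_nonneg Xbar, (#s).cast_nonneg (α := ℝ)]

lemma ConvexOn.map_average_le_average {E ι : Type*} [AddCommGroup E] [Module ℝ E] {g : E → ℝ}
    (hg : ConvexOn ℝ univ g) {t : Finset ι} (ht : t.Nonempty) (p : ι → E) :
    g ((1 / #t : ℝ) • ∑ i ∈ t, p i) ≤ (1 / #t : ℝ) * ∑ i ∈ t, g (p i) := by
  have hcard : (0 : ℝ) < #t := by exact_mod_cast ht.card_pos
  simpa only [smul_sum, mul_sum, smul_eq_mul] using hg.map_sum_le (fun _ _ => by positivity)
    (by rw [sum_const, nsmul_eq_mul, mul_one_div_cancel hcard.ne']) fun i _ => mem_univ (p i)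

lemma gradient_eq_zero_of_forall_le {E : Type*} [NormedAddCommGroup E] [InnerProductSpace ℝ E]
    [CompleteSpace E] {F : E → ℝ} {xstar : E} (hmin : ∀ x, F xstar ≤ F x) :
    gradient F xstar = 0 := by
  simp [gradient, IsLocalMin.fderiv_eq_zero (Filter.Eventually.of_forall hmin)]

section FiniteSum

variable {E : Type*} [NormedAddCommGroup E] [InnerProductSpace ℝ E]
  {n : ℕ} {f : Fin n → E → ℝ} {F : E → ℝ}

lemma convexOn_of_eq_average (hF : ∀ x, F x = (1 / n : ℝ) * ∑ i, f i x)
    (hconv : ∀ i, ConvexOn ℝ univ (f i)) : ConvexOn ℝ univ F := by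
  have hsum : ConvexOn ℝ univ (∑ i, f i) :=
    Finset.sum_induction _ (ConvexOn ℝ univ) (fun _ _ => ConvexOn.add)
      (convexOn_const 0 convex_univ) fun i _ => hconv i
  rw [show F = fun x => (1 / n : ℝ) • (∑ i, f i) x from
    funext fun x => by rw [hF, Finset.sum_apply, smul_eq_mul]]
  exact hsum.smul (by positivity)

variable [CompleteSpace E]

lemma hasGradientAt_of_eq_average (hF : ∀ x, F x = (1 / n : ℝ) * ∑ i, f i x)
    (hdiff : ∀ i, Differentiable ℝ (f i)) (p : E) :
    HasGradientAt F ((1 / n : ℝ) • ∑ i, gradient (f i) p) p := by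
  rw [hasGradientAt_iff_hasFDerivAt, map_smul, map_sum, show F = fun x => (1 / n : ℝ) • ∑ i, f i x
    from funext hF]
  exact (HasFDerivAt.fun_sum fun i _ => (hdiff i p).hasGradientAt.hasFDerivAt).fun_const_smul _

lemma sum_gradient_eq_of_eq_average (hn : 0 < n) (hF : ∀ x, F x = (1 / n : ℝ) * ∑ i, f i x)
    (hdiff : ∀ i, Differentiable ℝ (f i)) (p : E) :
    ∑ i, gradient (f i) p = (n : ℝ) • gradient F p := by
  rw [(hasGradientAt_of_eq_average hF hdiff p).gradient, smul_smul,
    mul_one_div_cancel (by positivity), one_smul]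

lemma sum_norm_sub_gradient_sq_le (hn : 0 < n) (hF : ∀ x, F x = (1 / n : ℝ) * ∑ i, f i x)
    (hconv : ∀ i, ConvexOn ℝ univ (f i)) (hdiff : ∀ i, Differentiable ℝ (f i))
    {L : ℝ} (hL : 0 < L) (hlip : ∀ i x y, ‖gradient (f i) x - gradient (f i) y‖ ≤ L * ‖x - y‖)
    {xstar : E} (hmin : ∀ x, F xstar ≤ F x) (z : E) :
    ∑ j, ‖gradient (f j) z - gradient (f j) xstar‖ ^ 2 ≤ 2 * L * n * (F z - F xstar) := by
  have hsum : ∀ y, ∑ j, f j y = n * F y := fun y => by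
    rw [hF, ← mul_assoc, mul_one_div_cancel (by positivity), one_mul]
  calc ∑ j, ‖gradient (f j) z - gradient (f j) xstar‖ ^ 2
      ≤ ∑ j, 2 * L * (f j z - f j xstar - ⟪gradient (f j) xstar, z - xstar⟫) :=
        sum_le_sum fun j _ => (hconv j).norm_sub_gradient_sq_le (hdiff j) hL (hlip j) z xstar
    _ = 2 * L * n * (F z - F xstar) := by
        rw [← mul_sum, sum_sub_distrib, sum_sub_distrib, ← sum_inner,
          sum_gradient_eq_of_eq_average hn hF hdiff, gradient_eq_zero_of_forall_le hmin, hsum,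
          hsum]
        simp only [smul_zero, inner_zero_left]
        ring

variable (f F) in
noncomputable def svrgGradient (q : E) (j : Fin n) (p : E) : E :=
  gradient (f j) p - gradient (f j) q + gradient F q

lemma sum_norm_svrgGradient_sq_le (hn : 0 < n) (hF : ∀ x, F x = (1 / n : ℝ) * ∑ i, f i x)
    (hconv : ∀ i, ConvexOn ℝ univ (f i)) (hdiff : ∀ i, Differentiable ℝ (f i))
    {L : ℝ} (hL : 0 < L) (hlip : ∀ i x y, ‖gradient (f i) x - gradient (f i) y‖ ≤ L * ‖x - y‖)
    {xstar : E} (hmin : ∀ x, F xstar ≤ F x) (q p : E) :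
    ∑ j, ‖svrgGradient f F q j p‖ ^ 2 ≤ 4 * L * n * ((F p - F xstar) + (F q - F xstar)) := by
  set Y : Fin n → E := fun j => gradient (f j) q - gradient (f j) xstar
  have hYavg : gradient F q = (1 / #(univ : Finset (Fin n)) : ℝ) • ∑ i, Y i := by
    rw [sum_sub_distrib, sum_gradient_eq_of_eq_average hn hF hdiff,
      sum_gradient_eq_of_eq_average hn hF hdiff, gradient_eq_zero_of_forall_le hmin, smul_zero,
      sub_zero, smul_smul, card_univ, Fintype.card_fin, one_div_mul_cancel (by positivity),
      one_smul]
  have hvar : ∑ j, ‖gradient F q - Y j‖ ^ 2 ≤ 2 * L * n * (F q - F xstar) := by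
    rw [hYavg]
    exact (sum_norm_average_sub_sq_le _ Y).trans
      (sum_norm_sub_gradient_sq_le hn hF hconv hdiff hL hlip hmin q)
  have hsplit : ∀ j, svrgGradient f F q j p
      = (gradient (f j) p - gradient (f j) xstar) + (gradient F q - Y j) := fun j => by
    simp only [svrgGradient, Y]; abel
  calc ∑ j, ‖svrgGradient f F q j p‖ ^ 2
      ≤ ∑ j, 2 * (‖gradient (f j) p - gradient (f j) xstar‖ ^ 2 + ‖gradient F q - Y j‖ ^ 2) :=
        sum_le_sum fun j _ => by
          rw [hsplit]
          exact (pow_le_pow_left₀ (norm_nonneg _) (norm_add_le _ _) 2).trans add_sq_le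
    _ ≤ _ := by
        rw [← mul_sum, sum_add_distrib]
        linarith [sum_norm_sub_gradient_sq_le hn hF hconv hdiff hL hlip hmin p]

lemma sum_svrgGradient (hn : 0 < n) (hF : ∀ x, F x = (1 / n : ℝ) * ∑ i, f i x)
    (hdiff : ∀ i, Differentiable ℝ (f i)) (q p : E) :
    ∑ j, svrgGradient f F q j p = (n : ℝ) • gradient F p := by
  simp only [svrgGradient, sum_add_distrib, sum_sub_distrib, sum_const, card_univ,
    Fintype.card_fin, sum_gradient_eq_of_eq_average hn hF hdiff, ← Nat.cast_smul_eq_nsmul ℝ]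
  abel

lemma sum_norm_sub_smul_svrgGradient_sub_sq_le (hn : 0 < n)
    (hF : ∀ x, F x = (1 / n : ℝ) * ∑ i, f i x)
    (hconv : ∀ i, ConvexOn ℝ univ (f i)) (hdiff : ∀ i, Differentiable ℝ (f i))
    {L : ℝ} (hL : 0 < L) (hlip : ∀ i x y, ‖gradient (f i) x - gradient (f i) y‖ ≤ L * ‖x - y‖)
    {xstar : E} (hmin : ∀ x, F xstar ≤ F x) {η : ℝ} (hη : 0 ≤ η) (q p : E) :
    ∑ j, ‖p - η • svrgGradient f F q j p - xstar‖ ^ 2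
      ≤ n * (‖p - xstar‖ ^ 2 - (2 * η - 4 * L * η ^ 2) * (F p - F xstar)
          + 4 * L * η ^ 2 * (F q - F xstar)) := by
  have hFdiff : Differentiable ℝ F := fun z =>
    (hasGradientAt_of_eq_average hF hdiff z).differentiableAt
  have hconvex : F p - F xstar ≤ ⟪gradient F p, p - xstar⟫ := by
    have := (convexOn_of_eq_average hF hconv).add_inner_gradient_le hFdiff p xstar
    rw [← neg_sub p xstar, inner_neg_right] at this
    linarith
  have hexpand : ∀ j, ‖p - η • svrgGradient f F q j p - xstar‖ ^ 2 = ‖p - xstar‖ ^ 2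
      - 2 * η * ⟪p - xstar, svrgGradient f F q j p⟫ + η ^ 2 * ‖svrgGradient f F q j p‖ ^ 2 :=
    fun j => by
      rw [sub_right_comm, norm_sub_sq_real, real_inner_smul_right, norm_smul,
        Real.norm_of_nonneg hη]
      ring
  have hinner : ∑ j, ⟪p - xstar, svrgGradient f F q j p⟫ = n * ⟪gradient F p, p - xstar⟫ := by
    rw [← inner_sum, sum_svrgGradient hn hF hdiff, real_inner_smul_right, real_inner_comm]
  have hsq := sum_norm_svrgGradient_sq_le hn hF hconv hdiff hL hlip hmin q p
  simp only [hexpand, sum_add_distrib, sum_sub_distrib, sum_const, card_univ, Fintype.card_fin,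
    nsmul_eq_mul, ← mul_sum, hinner]
  nlinarith [mul_le_mul_of_nonneg_left hconvex (by positivity : (0 : ℝ) ≤ 2 * η * n),
    mul_le_mul_of_nonneg_left hsq (sq_nonneg η)]

end FiniteSum

lemma Fintype.sum_sum_update {ι α M : Type*} [DecidableEq ι] [Fintype ι] [Fintype α]
    [AddCommMonoid M] (h : (ι → α) → M) (i : ι) :
    ∑ ω, ∑ a, h (update ω i a) = Fintype.card α • ∑ ω, h ω := by
  have hinv : Involutive fun p : (ι → α) × α => (update p.1 i p.2, p.1 i) := fun p => by
    simp
  rw [← Fintype.sum_prod_type', Fintype.sum_bijective _ hinv.bijective _ (fun p => h p.1)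
    fun p => rfl, Fintype.sum_prod_type]
  simp [smul_sum]

lemma Fintype.sum_sum_update_update {ι κ α M : Type*} [DecidableEq ι] [Fintype ι]
    [DecidableEq κ] [Fintype κ] [Fintype α] [AddCommMonoid M] (h : (ι → κ → α) → M)
    (i : ι) (k : κ) :
    ∑ ω, ∑ a, h (update ω i (update (ω i) k a)) = Fintype.card α • ∑ ω, h ω := by
  rw [← (Equiv.curry ι κ α).sum_comp, ← (Equiv.curry ι κ α).sum_comp]
  simpa only [Equiv.curry_apply, comp_apply, curry_update] using sum_sum_update (h ∘ curry) (i, k)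

lemma add_sum_range_le_of_le_sub_add {a b : ℕ → ℝ} {c : ℝ} {m : ℕ}
    (h : ∀ k < m, a (k + 1) ≤ a k - b k + c) : a m + ∑ k ∈ range m, b k ≤ a 0 + m * c := by
  have := sum_le_sum fun k hk => (by linarith [h k (mem_range.1 hk)] :
    a (k + 1) - a k ≤ c - b k)
  rw [sum_range_sub, sum_sub_distrib, sum_const, card_range, nsmul_eq_mul] at this
  linarith

lemma sum_range_succ_sub_eq_of_chain {u v : ℕ → ℝ} {N : ℕ} (h : ∀ s < N, u (s + 1) = v s) :
    ∑ s ∈ range (N + 1), (u s - v s) = u 0 - v N := by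
  induction N with
  | zero => simp
  | succ N ih =>
    rw [sum_range_succ, ih fun s hs => h s (by omega), h N N.lt_succ_self]
    ring

/-- `A s k`, `P s k` and `D s` stand for the expected squared distance to the minimizer and the
expected suboptimalities of the inner iterates and of the snapshots. -/
lemma mul_sum_range_le_of_epoch_bounds {A P : ℕ → ℕ → ℝ} {D : ℕ → ℝ} {c₂ c₃ : ℝ} {m S : ℕ}
    (hS : 0 < S) (hc₂ : 0 ≤ c₂) (hc₃ : 0 ≤ c₃)
    (hstep : ∀ s < S, ∀ k < m, A s (k + 1) ≤ A s k - c₂ * P s k + c₃ * D s)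
    (hsnap : ∀ s < S, ((m : ℝ) - 1) * D (s + 1) ≤ ∑ k ∈ range m, P s k)
    (hchain : ∀ s, s + 1 < S → A (s + 1) 0 = A s m) (hA : 0 ≤ A (S - 1) m)
    (hD : ∀ s, 0 ≤ D s) :
    (c₂ * ((m : ℝ) - 1) - m * c₃) * ∑ s ∈ range S, D (s + 1) ≤ A 0 0 + m * c₃ * D 0 := by
  obtain ⟨N, rfl⟩ : ∃ N, S = N + 1 := ⟨S - 1, by omega⟩
  have hepoch : ∀ s ∈ range (N + 1),
      c₂ * ((m : ℝ) - 1) * D (s + 1) ≤ (A s 0 - A s m) + m * c₃ * D s := fun s hs => by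
    have h := add_sum_range_le_of_le_sub_add (hstep s (mem_range.1 hs))
    rw [← mul_sum] at h
    nlinarith [mul_le_mul_of_nonneg_left (hsnap s (mem_range.1 hs)) hc₂]
  have htotal := sum_le_sum hepoch
  rw [sum_add_distrib, sum_range_succ_sub_eq_of_chain fun s hs => hchain s (by omega),
    ← mul_sum, ← mul_sum, sum_range_succ' D] at htotal
  have hshift : ∑ s ∈ range N, D (s + 1) ≤ ∑ s ∈ range (N + 1), D (s + 1) :=
    sum_le_sum_of_subset_of_nonneg (range_subset_range.2 N.le_succ) fun s _ _ => hD _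
  rw [Nat.add_sub_cancel] at hA
  nlinarith [mul_le_mul_of_nonneg_left hshift (by positivity : (0 : ℝ) ≤ m * c₃)]

/-- `ω s k` is the index drawn at inner step `k` of epoch `s`. Epochs are numbered from `0`, so
`xt ω s` is the snapshot `x̃ˢ` and `x ω s k` is the paper's `x_k^{s+1}`. -/
structure IsVRSGDRun {E : Type*} [NormedAddCommGroup E] [InnerProductSpace ℝ E] [CompleteSpace E]
    {n m S : ℕ} (f : Fin n → E → ℝ) (F : E → ℝ) (η : ℝ) (x₀ : E)
    (x : (Fin S → Fin m → Fin n) → ℕ → ℕ → E) (xt : (Fin S → Fin m → Fin n) → ℕ → E) : Prop where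
  snapshot_zero : ∀ ω, xt ω 0 = x₀
  iterate_zero_zero : ∀ ω, x ω 0 0 = x₀
  iterate_succ_zero : ∀ ω (s : ℕ), s + 1 < S → x ω (s + 1) 0 = x ω s m
  iterate_succ : ∀ ω (s : Fin S) (k : Fin m),
    x ω s (k + 1) = x ω s k - η • svrgGradient f F (xt ω s) (ω s k) (x ω s k)
  snapshot_succ : ∀ ω (s : Fin S),
    xt ω (s + 1) = (1 / ((m : ℝ) - 1)) • ∑ k ∈ range (m - 1), x ω s (k + 1)

namespace IsVRSGDRun

variable {E : Type*} [NormedAddCommGroup E] [InnerProductSpace ℝ E] [CompleteSpace E]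
  {n m S : ℕ} {f : Fin n → E → ℝ} {F : E → ℝ} {η : ℝ} {x₀ : E}
  {x : (Fin S → Fin m → Fin n) → ℕ → ℕ → E} {xt : (Fin S → Fin m → Fin n) → ℕ → E}

lemma iterate_congr (hrun : IsVRSGDRun f F η x₀ x xt) {ω ω' : Fin S → Fin m → Fin n} (s : Fin S)
    (hxt : xt ω s = xt ω' s) (hx : x ω s 0 = x ω' s 0) {k : ℕ} (hk : k ≤ m)
    (hω : ∀ k' : Fin m, (k' : ℕ) < k → ω s k' = ω' s k') :
    x ω s k = x ω' s k := by
  induction k with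
  | zero => exact hx
  | succ k ih =>
    have hk' : k < m := hk
    rw [hrun.iterate_succ ω s ⟨k, hk'⟩, hrun.iterate_succ ω' s ⟨k, hk'⟩, hxt,
      hω ⟨k, hk'⟩ k.lt_succ_self, ih hk'.le fun k' hk'' => hω k' (by omega)]

lemma congr_of_forall_lt (hrun : IsVRSGDRun f F η x₀ x xt) {ω ω' : Fin S → Fin m → Fin n}
    {s : ℕ} (hs : s ≤ S) (hω : ∀ s' : Fin S, (s' : ℕ) < s → ω s' = ω' s') :
    xt ω s = xt ω' s ∧ (s < S → x ω s 0 = x ω' s 0) := by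
  induction s with
  | zero => exact ⟨by rw [hrun.snapshot_zero, hrun.snapshot_zero],
      fun _ => by rw [hrun.iterate_zero_zero, hrun.iterate_zero_zero]⟩
  | succ s ih =>
    have hsS : s < S := hs
    obtain ⟨hxt, hx⟩ := ih hsS.le fun s' h => hω s' (by omega)
    have hepoch : ∀ k ≤ m, x ω s k = x ω' s k := fun k hk =>
      hrun.iterate_congr ⟨s, hsS⟩ hxt (hx hsS) hk fun k' _ => by
        rw [hω ⟨s, hsS⟩ s.lt_succ_self]
    refine ⟨?_, fun hs1 => ?_⟩
    · rw [hrun.snapshot_succ ω ⟨s, hsS⟩, hrun.snapshot_succ ω' ⟨s, hsS⟩]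
      exact congrArg _ (sum_congr rfl fun k hk => hepoch _ (by simp at hk; omega))
    · rw [hrun.iterate_succ_zero ω s hs1, hrun.iterate_succ_zero ω' s hs1, hepoch m le_rfl]

lemma iterate_succ_update (hrun : IsVRSGDRun f F η x₀ x xt) (ω : Fin S → Fin m → Fin n)
    (s : Fin S) (k : Fin m) (j : Fin n) :
    x (update ω s (update (ω s) k j)) s (k + 1)
      = x ω s k - η • svrgGradient f F (xt ω s) j (x ω s k) := by
  set ω' := update ω s (update (ω s) k j)
  obtain ⟨hxt, hx⟩ := hrun.congr_of_forall_lt (ω := ω') (ω' := ω) s.is_lt.le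
    fun s' h => update_of_ne (Fin.ne_of_lt h) _ _
  have hxk : x ω' s k = x ω s k := hrun.iterate_congr s hxt (hx s.is_lt) k.is_lt.le
    fun k' h => by simp [ω', update_of_ne (Fin.ne_of_lt h)]
  rw [hrun.iterate_succ, hxt, hxk]
  simp [ω']

lemma sum_norm_iterate_succ_sub_sq_le (hrun : IsVRSGDRun f F η x₀ x xt) (hn : 0 < n)
    (hF : ∀ x, F x = (1 / n : ℝ) * ∑ i, f i x)
    (hconv : ∀ i, ConvexOn ℝ univ (f i)) (hdiff : ∀ i, Differentiable ℝ (f i))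
    {L : ℝ} (hL : 0 < L) (hlip : ∀ i x y, ‖gradient (f i) x - gradient (f i) y‖ ≤ L * ‖x - y‖)
    {xstar : E} (hmin : ∀ x, F xstar ≤ F x) (hη : 0 ≤ η) (s : Fin S) (k : Fin m) :
    ∑ ω, ‖x ω s (k + 1) - xstar‖ ^ 2
      ≤ ∑ ω, ‖x ω s k - xstar‖ ^ 2 - (2 * η - 4 * L * η ^ 2) * ∑ ω, (F (x ω s k) - F xstar)
        + 4 * L * η ^ 2 * ∑ ω, (F (xt ω s) - F xstar) := by
  refine le_of_mul_le_mul_left ?_ (Nat.cast_pos.2 hn : (0 : ℝ) < n)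
  -- Resampling the index drawn at step `k` leaves `x ω s k` and `xt ω s` unchanged.
  calc (n : ℝ) * ∑ ω, ‖x ω s (k + 1) - xstar‖ ^ 2
      = ∑ ω, ∑ j, ‖x ω s k - η • svrgGradient f F (xt ω s) j (x ω s k) - xstar‖ ^ 2 := by
        have := Fintype.sum_sum_update_update (fun ω => ‖x ω s (k + 1) - xstar‖ ^ 2) s k
        rw [Fintype.card_fin, nsmul_eq_mul] at this
        simp only [← this, hrun.iterate_succ_update]
    _ ≤ ∑ ω, n * (‖x ω s k - xstar‖ ^ 2 - (2 * η - 4 * L * η ^ 2) * (F (x ω s k) - F xstar)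
          + 4 * L * η ^ 2 * (F (xt ω s) - F xstar)) := sum_le_sum fun ω _ =>
        sum_norm_sub_smul_svrgGradient_sub_sq_le hn hF hconv hdiff hL hlip hmin hη _ _
    _ = _ := by simp only [← mul_sum, sum_add_distrib, sum_sub_distrib]

lemma snapshot_succ_sub_le (hrun : IsVRSGDRun f F η x₀ x xt) (hm : 2 ≤ m)
    (hconv : ConvexOn ℝ univ F) {xstar : E} (hmin : ∀ x, F xstar ≤ F x)
    (ω : Fin S → Fin m → Fin n) (s : Fin S) :
    ((m : ℝ) - 1) * (F (xt ω (s + 1)) - F xstar) ≤ ∑ k ∈ range m, (F (x ω s k) - F xstar) := by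
  have hcard : (#(range (m - 1)) : ℝ) = (m : ℝ) - 1 := by
    rw [card_range, Nat.cast_sub (by omega), Nat.cast_one]
  have hm1 : (0 : ℝ) < (m : ℝ) - 1 := by
    rw [← hcard]; exact_mod_cast card_pos.2 (nonempty_range_iff.2 (by omega))
  have hjensen := hconv.map_average_le_average (t := range (m - 1))
    (nonempty_range_iff.2 (by omega)) fun k => x ω s (k + 1)
  rw [hcard, ← hrun.snapshot_succ, one_div_mul_eq_div, le_div_iff₀' hm1] at hjensen
  have hsplit : ∑ k ∈ range m, (F (x ω s k) - F xstar)
      = ∑ k ∈ range (m - 1), (F (x ω s (k + 1)) - F xstar) + (F (x ω s 0) - F xstar) := by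
    rw [← sum_range_succ' (fun k => F (x ω s k) - F xstar), Nat.sub_add_cancel (by omega)]
  rw [hsplit, sum_sub_distrib, sum_const, nsmul_eq_mul, hcard]
  linarith [hmin (x ω s 0)]

lemma mul_sum_sum_snapshot_sub_le (hrun : IsVRSGDRun f F η x₀ x xt) (hn : 0 < n) (hm : 2 ≤ m)
    (hS : 0 < S) (hF : ∀ x, F x = (1 / n : ℝ) * ∑ i, f i x)
    (hconv : ∀ i, ConvexOn ℝ univ (f i)) (hdiff : ∀ i, Differentiable ℝ (f i))
    {L : ℝ} (hL : 0 < L) (hlip : ∀ i x y, ‖gradient (f i) x - gradient (f i) y‖ ≤ L * ‖x - y‖)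
    {xstar : E} (hmin : ∀ x, F xstar ≤ F x) (hη : 0 ≤ η) (hηL : 2 * L * η ≤ 1) :
    ((2 * η - 4 * L * η ^ 2) * ((m : ℝ) - 1) - m * (4 * L * η ^ 2))
        * ∑ s ∈ range S, ∑ ω, (F (xt ω (s + 1)) - F xstar)
      ≤ Fintype.card (Fin S → Fin m → Fin n)
        * (‖x₀ - xstar‖ ^ 2 + m * (4 * L * η ^ 2) * (F x₀ - F xstar)) := by
  have hgap : ∀ z, 0 ≤ F z - F xstar := fun z => sub_nonneg.2 (hmin z)
  have hbound := mul_sum_range_le_of_epoch_bounds (m := m) hS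
    (A := fun s k => ∑ ω, ‖x ω s k - xstar‖ ^ 2) (P := fun s k => ∑ ω, (F (x ω s k) - F xstar))
    (D := fun s => ∑ ω, (F (xt ω s) - F xstar))
    (by nlinarith) (by positivity)
    (fun s hs k hk => hrun.sum_norm_iterate_succ_sub_sq_le hn hF hconv hdiff hL hlip hmin hη
      ⟨s, hs⟩ ⟨k, hk⟩)
    (fun s hs => by
      rw [mul_sum, sum_comm]
      exact sum_le_sum fun ω _ => hrun.snapshot_succ_sub_le hm (convexOn_of_eq_average hF hconv)
        hmin ω ⟨s, hs⟩)
    (fun s hs => sum_congr rfl fun ω _ => by rw [hrun.iterate_succ_zero ω s hs])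
    (sum_nonneg fun _ _ => by positivity) fun s => sum_nonneg fun ω _ => hgap _
  simp only [hrun.iterate_zero_zero, hrun.snapshot_zero, sum_const, card_univ,
    nsmul_eq_mul] at hbound
  linarith

end IsVRSGDRun

lemma le_vrsgd_bound_of_mul_le {L β η γ m T R D : ℝ} (hL : 0 < L) (hm : 2 ≤ m)
    (hη : η = 1 / (L * β)) (hγ : γ = (β - 1) * (m - 1)) (hγpos : γ - 4 * m + 2 > 0) (hR : 0 ≤ R) (hD : 0 ≤ D)
    (hT : ((2 * η - 4 * L * η ^ 2) * (m - 1) - m * (4 * L * η ^ 2)) * T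
      ≤ R + m * (4 * L * η ^ 2) * D) :
    T ≤ 2 * (m + 1) / (γ - 4 * m + 2) * D + β * (β - 1) * L / (2 * (γ - 4 * m + 2)) * R := by
  have hβ : 1 < β := by nlinarith
  have hgap : 0 < γ - 3 * m + 1 := by linarith
  have hK : ((2 * η - 4 * L * η ^ 2) * (m - 1) - m * (4 * L * η ^ 2))
      = 2 * (γ - 3 * m + 1) / (L * β ^ 2) := by
    subst hη hγ; field_simp; ring
  have hc₃ : m * (4 * L * η ^ 2) = 4 * m / (L * β ^ 2) := by
    subst hη; field_simp
  rw [hK, hc₃, mul_comm, ← le_div_iff₀ (by positivity)] at hT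
  have hR' : L * β ^ 2 / (2 * (γ - 3 * m + 1)) ≤ β * (β - 1) * L / (2 * (γ - 4 * m + 2)) := by
    rw [div_le_div_iff₀ (by positivity) (by positivity)]
    subst hγ; nlinarith [mul_pos hL (by linarith : (0 : ℝ) < β)]
  have hD' : 2 * m / (γ - 3 * m + 1) ≤ 2 * (m + 1) / (γ - 4 * m + 2) := by
    rw [div_le_div_iff₀ hgap hγpos]; nlinarith
  calc T ≤ (R + 4 * m / (L * β ^ 2) * D) / (2 * (γ - 3 * m + 1) / (L * β ^ 2)) := hT
    _ = 2 * m / (γ - 3 * m + 1) * D + L * β ^ 2 / (2 * (γ - 3 * m + 1)) * R := by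
      field_simp; ring
    _ ≤ _ := by gcongr

lemma sub_le_average_of_output {E : Type*} [AddCommGroup E] [Module ℝ E] {F : E → ℝ}
    (hconv : ConvexOn ℝ univ F) {S : ℕ} (hS : 0 < S) {z : ℕ → E} {xhat : E}
    (hout : (F (z S) ≤ F ((1 / S : ℝ) • ∑ s ∈ range S, z (s + 1)) → xhat = z S) ∧
      (¬ F (z S) ≤ F ((1 / S : ℝ) • ∑ s ∈ range S, z (s + 1)) →
        xhat = (1 / S : ℝ) • ∑ s ∈ range S, z (s + 1)))
    (c : ℝ) : F xhat - c ≤ (1 / S : ℝ) * ∑ s ∈ range S, (F (z (s + 1)) - c) := by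
  have hle : F xhat ≤ F ((1 / S : ℝ) • ∑ s ∈ range S, z (s + 1)) := by
    by_cases h : F (z S) ≤ F ((1 / S : ℝ) • ∑ s ∈ range S, z (s + 1))
    · rwa [hout.1 h]
    · rw [hout.2 h]
  have hjensen := hconv.map_average_le_average (nonempty_range_iff.2 hS.ne') fun s => z (s + 1)
  rw [card_range] at hjensen
  rw [sum_sub_distrib, sum_const, card_range, nsmul_eq_mul, mul_sub, ← mul_assoc,
    one_div_mul_cancel (by positivity), one_mul]
  linarith

/-- Expectations over all random indices are uniform averages over the sample paths `ω`. -/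
theorem stmt_12_general (d n m S : ℕ) (hn : 0 < n) (hm : 2 ≤ m) (hS : 0 < S)
    (L β η γ : ℝ) (hL : 0 < L) (hη : η = 1 / (L * β))
    (hγ : γ = (β - 1) * ((m : ℝ) - 1)) (hγpos : γ - 4 * m + 2 > 0)
    (f : Fin n → EuclideanSpace ℝ (Fin d) → ℝ)
    (hconv : ∀ i, ConvexOn ℝ Set.univ (f i))
    (hdiff : ∀ i, Differentiable ℝ (f i))
    (hlip : ∀ i x y, ‖gradient (f i) x - gradient (f i) y‖ ≤ L * ‖x - y‖)
    (favg : EuclideanSpace ℝ (Fin d) → ℝ)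
    (hfavg : ∀ x, favg x = (1 / n : ℝ) * ∑ i, f i x)
    (xstar : EuclideanSpace ℝ (Fin d)) (hmin : ∀ x, favg xstar ≤ favg x)
    (xt0 : EuclideanSpace ℝ (Fin d))
    (x : (Fin S → Fin m → Fin n) → ℕ → ℕ → EuclideanSpace ℝ (Fin d))
    (xt : (Fin S → Fin m → Fin n) → ℕ → EuclideanSpace ℝ (Fin d))
    (hxt0 : ∀ ω, xt ω 0 = xt0)
    (hstart0 : ∀ ω, x ω 0 0 = xt0)
    (hstart : ∀ ω (s : ℕ), s + 1 < S → x ω (s + 1) 0 = x ω s m)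
    (hstep : ∀ ω (s : Fin S) (k : Fin m),
      x ω (s : ℕ) ((k : ℕ) + 1) = x ω (s : ℕ) (k : ℕ) -
        η • (gradient (f (ω s k)) (x ω (s : ℕ) (k : ℕ))
              - gradient (f (ω s k)) (xt ω (s : ℕ)) + gradient favg (xt ω (s : ℕ))))
    (hsnap : ∀ ω (s : Fin S),
      xt ω ((s : ℕ) + 1) =
        (1 / ((m : ℝ) - 1)) • ∑ k ∈ Finset.range (m - 1), x ω (s : ℕ) (k + 1))
    (xhat : (Fin S → Fin m → Fin n) → EuclideanSpace ℝ (Fin d))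
    (hout : ∀ ω,
      (favg (xt ω S) ≤ favg ((1 / S : ℝ) • ∑ s ∈ Finset.range S, xt ω (s + 1)) →
        xhat ω = xt ω S) ∧
      (¬ favg (xt ω S) ≤ favg ((1 / S : ℝ) • ∑ s ∈ Finset.range S, xt ω (s + 1)) →
        xhat ω = (1 / S : ℝ) • ∑ s ∈ Finset.range S, xt ω (s + 1))) :
    (Fintype.card (Fin S → Fin m → Fin n) : ℝ)⁻¹ *
        ∑ ω : Fin S → Fin m → Fin n, (favg (xhat ω)) - favg xstar
      ≤ (2 * (m + 1) / ((γ - 4 * m + 2) * S)) * (favg xt0 - favg xstar)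
        + (β * (β - 1) * L / (2 * (γ - 4 * m + 2) * S)) * ‖xt0 - xstar‖ ^ 2 := by
  have hmR : (2 : ℝ) ≤ m := by exact_mod_cast hm
  have hβ : 2 < β := by nlinarith
  have hη0 : 0 ≤ η := by rw [hη]; positivity
  have hηL : 2 * L * η ≤ 1 := by
    rw [hη, mul_one_div, div_le_one (by positivity)]; nlinarith
  have hrun : IsVRSGDRun f favg η xt0 x xt := ⟨hxt0, hstart0, hstart, hstep, hsnap⟩
  set N : ℝ := (Fintype.card (Fin S → Fin m → Fin n) : ℝ)
  have hN : 0 < N := Nat.cast_pos.2 (Fintype.card_pos_iff.2 ⟨fun _ _ => ⟨0, hn⟩⟩)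
  have hrate := le_vrsgd_bound_of_mul_le hL hmR hη hγ hγpos (sq_nonneg ‖xt0 - xstar‖)
    (sub_nonneg.2 (hmin xt0)) (T := N⁻¹ * ∑ s ∈ range S, ∑ ω, (favg (xt ω (s + 1)) - favg xstar))
    (by
      rw [mul_left_comm, inv_mul_le_iff₀ hN]
      exact hrun.mul_sum_sum_snapshot_sub_le hn hm hS hfavg hconv hdiff hL hlip hmin hη0 hηL)
  have hSR : (0 : ℝ) < S := by exact_mod_cast hS
  calc N⁻¹ * ∑ ω, favg (xhat ω) - favg xstar = N⁻¹ * ∑ ω, (favg (xhat ω) - favg xstar) := by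
        rw [sum_sub_distrib, sum_const, card_univ, nsmul_eq_mul, mul_sub,
          inv_mul_cancel_left₀ hN.ne']
    _ ≤ N⁻¹ * ∑ ω, (1 / S : ℝ) * ∑ s ∈ range S, (favg (xt ω (s + 1)) - favg xstar) := by
        gcongr with ω
        exact sub_le_average_of_output (convexOn_of_eq_average hfavg hconv) hS (hout ω) _
    _ = (N⁻¹ * ∑ s ∈ range S, ∑ ω, (favg (xt ω (s + 1)) - favg xstar)) / S := by
        rw [← mul_sum, sum_comm]; ring
    _ ≤ _ := by
        rw [div_le_iff₀ hSR]
        refine hrate.trans_eq ?_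
        have := hγpos.ne'
        field_simp

/-- O(1/T) convergence of VR-SGD (Option II) for smooth non-strongly
convex objectives. Expectations over all random indices are uniform averages over
`ω : Fin S → Fin m → Fin n` (epoch `s`, inner iteration `k`, sampled index `ω s k`). -/
theorem stmt_12 (d n m S : ℕ) (hn : 0 < n) (hm : 2 ≤ m) (hS : 0 < S)
    (L β η γ : ℝ) (hL : 0 < L) (hβ : 3 < β) (hη : η = 1 / (L * β))
    (hγ : γ = (β - 1) * ((m : ℝ) - 1)) (hγpos : γ - 4 * m + 2 > 0)
    (f : Fin n → EuclideanSpace ℝ (Fin d) → ℝ)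
    (hconv : ∀ i, ConvexOn ℝ Set.univ (f i))
    (hdiff : ∀ i, Differentiable ℝ (f i))
    (hlip : ∀ i x y, ‖gradient (f i) x - gradient (f i) y‖ ≤ L * ‖x - y‖)
    (favg : EuclideanSpace ℝ (Fin d) → ℝ)
    (hfavg : ∀ x, favg x = (1 / n : ℝ) * ∑ i, f i x)
    (xstar : EuclideanSpace ℝ (Fin d)) (hmin : ∀ x, favg xstar ≤ favg x)
    (xt0 : EuclideanSpace ℝ (Fin d))
    (x : (Fin S → Fin m → Fin n) → ℕ → ℕ → EuclideanSpace ℝ (Fin d))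
    (xt : (Fin S → Fin m → Fin n) → ℕ → EuclideanSpace ℝ (Fin d))
    (hxt0 : ∀ ω, xt ω 0 = xt0)
    (hstart0 : ∀ ω, x ω 0 0 = xt0)
    (hstart : ∀ ω (s : ℕ), s + 1 < S → x ω (s + 1) 0 = x ω s m)
    (hstep : ∀ ω (s : Fin S) (k : Fin m),
      x ω (s : ℕ) ((k : ℕ) + 1) = x ω (s : ℕ) (k : ℕ) -
        η • (gradient (f (ω s k)) (x ω (s : ℕ) (k : ℕ))
              - gradient (f (ω s k)) (xt ω (s : ℕ)) + gradient favg (xt ω (s : ℕ))))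
    (hsnap : ∀ ω (s : Fin S),
      xt ω ((s : ℕ) + 1) =
        (1 / ((m : ℝ) - 1)) • ∑ k ∈ Finset.range (m - 1), x ω (s : ℕ) (k + 1))
    (xhat : (Fin S → Fin m → Fin n) → EuclideanSpace ℝ (Fin d))
    (hout : ∀ ω,
      (favg (xt ω S) ≤ favg ((1 / S : ℝ) • ∑ s ∈ Finset.range S, xt ω (s + 1)) →
        xhat ω = xt ω S) ∧
      (¬ favg (xt ω S) ≤ favg ((1 / S : ℝ) • ∑ s ∈ Finset.range S, xt ω (s + 1)) →
        xhat ω = (1 / S : ℝ) • ∑ s ∈ Finset.range S, xt ω (s + 1))) :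
    (Fintype.card (Fin S → Fin m → Fin n) : ℝ)⁻¹ *
        ∑ ω : Fin S → Fin m → Fin n, (favg (xhat ω)) - favg xstar
      ≤ (2 * (m + 1) / ((γ - 4 * m + 2) * S)) * (favg xt0 - favg xstar)
        + (β * (β - 1) * L / (2 * (γ - 4 * m + 2) * S)) * ‖xt0 - xstar‖ ^ 2 :=
  stmt_12_general d n m S hn hm hS L β η γ hL hη hγ hγpos f hconv hdiff hlip favg hfavg xstar hmin
    xt0 x xt hxt0 hstart0 hstart hstep hsnap xhat hout
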